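/- Let N ≥ W > L > 0 with 2L ≤ N, and let M = ⌈(N+W−1)/L⌉. There exists a nonzero polynomial P in the 2(N+W) real variables given by the real and imaginary parts of the entries of (x,w) ∈ ℂ^N × ℂ^W such that: for every pair (x,w) with P(x,w) ≠ 0 and every (x',w') ∈ ℂ^N × ℂ^W satisfying ŷ'[k,m] = ŷ[k,m] for all m = 0,…,M−1 and all k = 0,…,2L−1, there exist nonzero complex numbers λ = (λ_0,…,λ_{L−1}) with (x',w') = λ∘(x,w). That is, 2L Fourier measurements per window suffice to determine a generic pair (x,w) modulo the scaling ambiguities. -/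

import Mathlib

open Complex BigOperators

/-- Extension of a finite vector `w ∈ ℂ^W` to `ℤ` by zero outside `{0,…,W−1}`. -/
noncomputable def zext {W : ℕ} (w : Fin W → ℂ) (j : ℤ) : ℂ :=
  if h : 0 ≤ j ∧ j < (W : ℤ) then w ⟨j.toNat, by omega⟩ else 0

/-- The blind short-time Fourier transform
`ŷ[k,m] = Σ_{n=0}^{N−1} x[n]·w[mL−n]·e^{−2πikn/N}`. -/
noncomputable def stft {N W : ℕ} (x : Fin N → ℂ) (w : Fin W → ℂ)
    (L : ℕ) (k : ℤ) (m : ℕ) : ℂ :=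
  ∑ n : Fin N, x n * zext w ((m : ℤ) * L - (n : ℕ)) *
    Complex.exp (-(2 * (Real.pi : ℂ) * Complex.I * (k : ℂ) * ((n : ℕ) : ℂ)) / (N : ℂ))

/-- The `2(N+W)` real variables of a pair `(x,w) ∈ ℂ^N × ℂ^W`:
real and imaginary parts of all the entries. -/
noncomputable def realVars {N W : ℕ} (x : Fin N → ℂ) (w : Fin W → ℂ) :
    (Fin N ⊕ Fin W) × Bool → ℝ
  | (Sum.inl n, false) => (x n).re
  | (Sum.inl n, true) => (x n).im
  | (Sum.inr n, false) => (w n).re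
  | (Sum.inr n, true) => (w n).im

/-!
Write `E(n, j)` for `x'[n]·w'[j] = x[n]·w[j]`. For `m = 0, 1, …` we show `E(n, mL − n)` for all
`n`. If `n ≥ L` and `mL − n ≥ L`, it follows from the earlier windows `m − 1` and `m − 2`, since
`x[n]w[j] = (x[n]w[j−L])·(x[n−L]w[j]) / (x[n−L]w[j−L])`. The remaining differences
`x'[n]w'[mL−n] − x[n]w[mL−n]` are supported on at most `2L` indices, and the `2L` samples of window
`m` say that their first `2L` moments at the distinct roots of unity `e^{−2πin/N}` vanish; by
Vandermonde they vanish too. So `x'[n]w'[j] = x[n]w[j]` whenever `L ∣ n + j`, and the scaling is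
`λ_r = x'[r]/x[r]`.
-/

open Finset Fin.NatCast MvPolynomial

theorem eq_zero_of_forall_sum_mul_pow_eq_zero {ι R : Type*} [Fintype ι] [CommRing R]
    [IsDomain R] {z v : ι → R} (hz : Function.Injective z) {s : Finset ι}
    (hv : ∀ i ∉ s, v i = 0) {d : ℕ} (hd : #s ≤ d) (h : ∀ k < d, ∑ i, v i * z i ^ k = 0) :
    v = 0 := by
  let e := s.equivFin
  have hsum (k : ℕ) (hk : k < d) : ∑ j : Fin #s, v (e.symm j) * z (e.symm j) ^ k = 0 := by
    rw [e.symm.sum_comp (fun i : s => v i * z i ^ k), sum_coe_sort s (fun i => v i * z i ^ k),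
      sum_subset (subset_univ s) fun i _ hi => by simp [hv i hi]]
    exact h k hk
  have hvs := Matrix.eq_zero_of_forall_pow_sum_mul_pow_eq_zero
    (hz.comp (Subtype.val_injective.comp e.symm.injective)) fun i => hsum i (i.2.trans_le hd)
  funext i
  by_cases hi : i ∈ s
  · simpa using congrFun hvs (e ⟨i, hi⟩)
  · exact hv i hi

theorem mul_eq_mul_of_cross {K : Type*} [CommGroupWithZero K] {a b c d a' b' c' d' : K}
    (had : a' * d' = a * d) (hcb : c' * b' = c * b) (hcd : c' * d' = c * d)
    (hc : c ≠ 0) (hd : d ≠ 0) : a' * b' = a * b := by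
  apply mul_right_cancel₀ (hcd ▸ mul_ne_zero hc hd : c' * d' ≠ 0)
  calc a' * b' * (c' * d') = (a' * d') * (c' * b') := by ac_rfl
    _ = a * b * (c' * d') := by rw [had, hcb, hcd]; ac_rfl

lemma zext_natCast {W : ℕ} (w : Fin W → ℂ) (j : Fin W) : zext w (j : ℕ) = w j := by
  simp [zext]

lemma zext_ne_zero {W : ℕ} {w : Fin W → ℂ} (hw : ∀ j, w j ≠ 0) {j : ℤ} (h0 : 0 ≤ j)
    (hj : j < W) : zext w j ≠ 0 := by
  simp [zext, h0, hj, hw]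

lemma zext_mul_zext_eq_zero {N W : ℕ} (x : Fin N → ℂ) (w : Fin W → ℂ) {n j : ℤ}
    (h : n < 0 ∨ N ≤ n ∨ j < 0 ∨ W ≤ j) : zext x n * zext w j = 0 := by
  unfold zext
  split_ifs <;> simp_all; omega

lemma exp_neg_two_pi_mul_div (N k n : ℕ) :
    exp (-(2 * Real.pi * I * k * n) / N) = ((exp (2 * Real.pi * I / N))⁻¹ ^ n) ^ k := by
  rw [← exp_neg, ← exp_nat_mul, ← exp_nat_mul]
  congr 1; ring

lemma stft_eq_sum_pow {N W : ℕ} (x : Fin N → ℂ) (w : Fin W → ℂ) (L k m : ℕ) :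
    stft x w L k m = ∑ n : Fin N,
      x n * zext w (m * L - (n : ℕ)) * ((exp (2 * Real.pi * I / N))⁻¹ ^ (n : ℕ)) ^ k := by
  simp only [stft, Int.cast_natCast, exp_neg_two_pi_mul_div]

lemma card_window_support_le (N L m : ℕ) :
    #{n : Fin N | (n : ℕ) < L ∨ m * L < n + L ∧ (n : ℕ) ≤ m * L} ≤ 2 * L := by
  calc _ = #(({n : Fin N | (n : ℕ) < L ∨ m * L < n + L ∧ (n : ℕ) ≤ m * L} : Finset (Fin N)).map
        Fin.valEmbedding) := (card_map _).symm
    _ ≤ #(range L ∪ Ioc (m * L - L) (m * L)) := card_le_card fun n => by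
        simp only [mem_map, mem_filter_univ, Fin.valEmbedding_apply, mem_union, mem_range, mem_Ioc]
        rintro ⟨n, hn, rfl⟩
        omega
    _ ≤ 2 * L := (card_union_le _ _).trans (by simp; omega)

section Windows

variable {N W L : ℕ} {x x' : Fin N → ℂ} {w w' : Fin W → ℂ}

theorem window_products_eq_of_stft_eq {m : ℕ}
    (hmeas : ∀ k < 2 * L, stft x' w' L k m = stft x w L k m)
    (hcross : ∀ n j : ℤ, n + j = m * L → L ≤ n → L ≤ j →
      zext x' n * zext w' j = zext x n * zext w j)
    (n j : ℤ) (hnj : n + j = m * L) : zext x' n * zext w' j = zext x n * zext w j := by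
  set v : Fin N → ℂ := fun i =>
    x' i * zext w' (m * L - (i : ℕ)) - x i * zext w (m * L - (i : ℕ)) with hv_def
  have hv : v = 0 := by
    refine eq_zero_of_forall_sum_mul_pow_eq_zero
      (z := fun i : Fin N => (exp (2 * Real.pi * I / N))⁻¹ ^ (i : ℕ))
      (fun a b hab => Fin.ext ((isPrimitiveRoot_exp N a.pos.ne').inv.pow_inj a.2 b.2 hab))
      (s := {i : Fin N | (i : ℕ) < L ∨ m * L < i + L ∧ (i : ℕ) ≤ m * L})
      (fun i hi => ?_) (card_window_support_le N L m) fun k hk => ?_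
    · simp only [mem_filter_univ, not_or, not_and, not_le, not_lt] at hi
      rw [hv_def, sub_eq_zero, ← zext_natCast x' i, ← zext_natCast x i]
      rcases lt_or_ge (m * L) (i : ℕ) with hlt | hle
      · rw [zext_mul_zext_eq_zero x' w' (by omega), zext_mul_zext_eq_zero x w (by omega)]
      · exact hcross _ _ (by ring) (by omega) (by omega)
    · simp only [hv_def, sub_mul, sum_sub_distrib, ← stft_eq_sum_pow, hmeas k hk, sub_self]
  by_cases hn : 0 ≤ n ∧ n < N
  · lift n to ℕ using hn.1
    have hvn := congrFun hv ⟨n, by omega⟩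
    rw [hv_def, Pi.zero_apply, sub_eq_zero] at hvn
    simpa [← zext_natCast, show (m * L - n : ℤ) = j by omega] using hvn
  · rw [zext_mul_zext_eq_zero x' w' (by omega), zext_mul_zext_eq_zero x w (by omega)]

theorem products_eq_of_stft_eq (hL : 0 < L) (hx : ∀ n, x n ≠ 0) (hw : ∀ j, w j ≠ 0)
    (hmeas : ∀ m < (N + W - 1 + L - 1) / L, ∀ k < 2 * L, stft x' w' L k m = stft x w L k m)
    (m : ℕ) (n j : ℤ) (hnj : n + j = m * L) : zext x' n * zext w' j = zext x n * zext w j := by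
  induction m using Nat.strong_induction_on generalizing n j with
  | _ m IH =>
  rcases lt_or_ge m ((N + W - 1 + L - 1) / L) with hm | hm
  · refine window_products_eq_of_stft_eq (hmeas m hm) (fun n j hnj hn hj => ?_) n j hnj
    by_cases hr : n < N ∧ j < W
    · have hm2 : 2 ≤ m := by
        have : (2 * L : ℤ) ≤ m * L := by omega
        exact_mod_cast le_of_mul_le_mul_right this (by exact_mod_cast hL)
      have cast1 : ((m - 1 : ℕ) : ℤ) * L = m * L - L := by
        push_cast [Nat.cast_sub (by omega : 1 ≤ m)]; ring
      have cast2 : ((m - 2 : ℕ) : ℤ) * L = m * L - 2 * L := by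
        push_cast [Nat.cast_sub hm2]; ring
      exact mul_eq_mul_of_cross (IH (m - 1) (by omega) n (j - L) (by rw [cast1]; linarith))
        (IH (m - 1) (by omega) (n - L) j (by rw [cast1]; linarith))
        (IH (m - 2) (by omega) (n - L) (j - L) (by rw [cast2]; linarith))
        (zext_ne_zero hx (by omega) (by omega)) (zext_ne_zero hw (by omega) (by omega))
    · rw [zext_mul_zext_eq_zero x' w' (by omega), zext_mul_zext_eq_zero x w (by omega)]
  · -- past the last window `mL ≥ N + W - 1`, so `n < N` and `j < W` cannot both hold
    have hceil := Nat.lt_div_mul_add (a := N + W - 1 + L - 1) hL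
    have : (N + W - 1 + L - 1) / L * L ≤ m * L := Nat.mul_le_mul_right L hm
    rw [zext_mul_zext_eq_zero x' w' (by omega), zext_mul_zext_eq_zero x w (by omega)]

end Windows

theorem exists_scaling_of_mul_eq_mul {K : Type*} [Field K] {N W L : ℕ} [NeZero L]
    (hLN : L ≤ N) (hLW : L ≤ W) {x x' : Fin N → K} {w w' : Fin W → K}
    (hx : ∀ n, x n ≠ 0) (hw : ∀ j, w j ≠ 0)
    (hprod : ∀ (n : Fin N) (j : Fin W), L ∣ (n : ℕ) + j → x' n * w' j = x n * w j) :
    ∃ lam : Fin L → K, (∀ r, lam r ≠ 0) ∧ (∀ n : Fin N, x' n = lam (n : ℕ) * x n) ∧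
      ∀ j : Fin W, w' j = (lam (-((j : ℕ) : Fin L)))⁻¹ * w j := by
  have hdvd (n : ℕ) : L ∣ n + (-(n : Fin L) : Fin L) := by
    rw [← Fin.natCast_eq_zero]
    simp
  have hx'_ne (r : Fin L) : x' (Fin.castLE hLN r) ≠ 0 := by
    intro h0
    have h := hprod (Fin.castLE hLN r) (Fin.castLE hLW (-r)) (by simpa using hdvd r)
    exact mul_ne_zero (hx _) (hw _) (by rw [← h, h0, zero_mul])
  set lam : Fin L → K := fun r => x' (Fin.castLE hLN r) / x (Fin.castLE hLN r)
  have hlam (r : Fin L) : lam r ≠ 0 := div_ne_zero (hx'_ne r) (hx _)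
  have hw' (j : Fin W) : w' j = (lam (-((j : ℕ) : Fin L)))⁻¹ * w j := by
    have h := hprod (Fin.castLE hLN (-((j : ℕ) : Fin L))) j (by simpa [add_comm] using hdvd j)
    have := hx'_ne (-((j : ℕ) : Fin L))
    have := hx (Fin.castLE hLN (-((j : ℕ) : Fin L)))
    simp only [lam, inv_div]
    field_simp
    linear_combination h
  refine ⟨lam, hlam, fun n => ?_, hw'⟩
  have h := hprod n (Fin.castLE hLW (-(n : Fin L))) (by simpa using hdvd n)
  rw [hw', show -(((Fin.castLE hLW (-(n : Fin L)) : Fin W) : ℕ) : Fin L) = (n : Fin L) by simp] at h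
  have := hlam n
  have := hw (Fin.castLE hLW (-(n : Fin L)))
  field_simp at h
  linear_combination h

noncomputable def prodNormSqPoly (N W : ℕ) : MvPolynomial ((Fin N ⊕ Fin W) × Bool) ℝ :=
  ∏ i, (X (i, false) ^ 2 + X (i, true) ^ 2)

lemma eval_prodNormSqPoly {N W : ℕ} (x : Fin N → ℂ) (w : Fin W → ℂ) :
    eval (realVars x w) (prodNormSqPoly N W) = ∏ i, normSq (Sum.elim x w i) := by
  simp only [prodNormSqPoly, map_prod, map_add, map_pow, eval_X]
  refine prod_congr rfl fun i _ => ?_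
  rcases i with n | j <;> simp [realVars, normSq_apply, sq]

lemma prodNormSqPoly_ne_zero (N W : ℕ) : prodNormSqPoly N W ≠ 0 := fun h => by
  simpa [eval_prodNormSqPoly] using congrArg (eval (realVars (N := N) (W := W) 1 1)) h

lemma eval_prodNormSqPoly_ne_zero_iff {N W : ℕ} (x : Fin N → ℂ) (w : Fin W → ℂ) :
    eval (realVars x w) (prodNormSqPoly N W) ≠ 0 ↔ (∀ n, x n ≠ 0) ∧ ∀ j, w j ≠ 0 := by
  simp [eval_prodNormSqPoly, prod_ne_zero_iff]

theorem blind_stft_uniqueness_twoL_per_window_general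
    {N W L : ℕ} (hL : 0 < L) (hLW : L < W) (hWN : W ≤ N) :
    ∃ P : MvPolynomial ((Fin N ⊕ Fin W) × Bool) ℝ,
      P ≠ 0 ∧
      ∀ (x : Fin N → ℂ) (w : Fin W → ℂ),
        MvPolynomial.eval (realVars x w) P ≠ 0 →
        ∀ (x' : Fin N → ℂ) (w' : Fin W → ℂ),
          (∀ m : Fin ((N + W - 1 + L - 1) / L), ∀ k : ℕ, k < 2 * L →
            stft x' w' L (k : ℤ) (m : ℕ) = stft x w L (k : ℤ) (m : ℕ)) →
          ∃ lam : Fin L → ℂ, (∀ j, lam j ≠ 0) ∧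
            (∀ n : Fin N, x' n = lam ⟨(n : ℕ) % L, Nat.mod_lt _ hL⟩ * x n) ∧
            (∀ n : Fin W, w' n = (lam ⟨(L - (n : ℕ) % L) % L, Nat.mod_lt _ hL⟩)⁻¹ * w n) := by
  have : NeZero L := ⟨hL.ne'⟩
  refine ⟨prodNormSqPoly N W, prodNormSqPoly_ne_zero N W, fun x w hP x' w' hmeas => ?_⟩
  obtain ⟨hx, hw⟩ := (eval_prodNormSqPoly_ne_zero_iff x w).1 hP
  -- `lam (n : Fin L)` and `lam (-(n : Fin L))` unfold to the index expressions of the statement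
  refine exists_scaling_of_mul_eq_mul (hLW.le.trans hWN) hLW.le hx hw fun n j ⟨c, hc⟩ => ?_
  simpa only [zext_natCast] using products_eq_of_stft_eq hL hx hw
    (fun m hm k hk => hmeas ⟨m, hm⟩ k hk) c n j (by rw [mul_comm]; exact_mod_cast hc)

/-- `2L` Fourier measurements per window (frequencies
`k = 0,…,2L−1`) suffice to determine a generic pair `(x,w)` modulo
the scaling ambiguities. -/
theorem blind_stft_uniqueness_twoL_per_window
    {N W L : ℕ} (hL : 0 < L) (hLW : L < W) (hWN : W ≤ N) (h2L : 2 * L ≤ N) :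
    ∃ P : MvPolynomial ((Fin N ⊕ Fin W) × Bool) ℝ,
      P ≠ 0 ∧
      ∀ (x : Fin N → ℂ) (w : Fin W → ℂ),
        MvPolynomial.eval (realVars x w) P ≠ 0 →
        ∀ (x' : Fin N → ℂ) (w' : Fin W → ℂ),
          (∀ m : Fin ((N + W - 1 + L - 1) / L), ∀ k : ℕ, k < 2 * L →
            stft x' w' L (k : ℤ) (m : ℕ) = stft x w L (k : ℤ) (m : ℕ)) →
          ∃ lam : Fin L → ℂ, (∀ j, lam j ≠ 0) ∧
            (∀ n : Fin N, x' n = lam ⟨(n : ℕ) % L, Nat.mod_lt _ hL⟩ * x n) ∧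
            (∀ n : Fin W, w' n = (lam ⟨(L - (n : ℕ) % L) % L, Nat.mod_lt _ hL⟩)⁻¹ * w n) :=
  blind_stft_uniqueness_twoL_per_window_general hL hLW hWN
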